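/- For any $m_1 \times m_2$ real matrices $A$ and $B$, with $\mathbf{P}_A(B) = B - P_{S_1^\perp(A)} B P_{S_2^\perp(A)}$ as above, the nuclear norm satisfies $\|\mathbf{P}_A(B)\|_1 \le \sqrt{2\,\mathrm{rank}(A)}\,\|B\|_2$, where $\|\cdot\|_2$ is the Frobenius norm. -/

import Mathlib

open Matrix

noncomputable def frobNorm {m n : ℕ} (A : Matrix (Fin m) (Fin n) ℝ) : ℝ :=
  Real.sqrt (∑ i, ∑ j, (A i j) ^ 2)

/-- Nuclear norm: sum of singular values, i.e. square roots of eigenvalues of `Aᴴ * A`. -/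
noncomputable def nuclearNorm {m n : ℕ} (A : Matrix (Fin m) (Fin n) ℝ) : ℝ :=
  ∑ i, Real.sqrt ((Matrix.isHermitian_conjTranspose_mul_self A).eigenvalues i)

/-- Operator (spectral) norm: supremum of `‖A v‖` over Euclidean unit vectors `v`. -/
noncomputable def opNorm {m n : ℕ} (M : Matrix (Fin m) (Fin n) ℝ) : ℝ :=
  sSup {c | ∃ v : Fin n → ℝ, ∑ i, (v i) ^ 2 = 1 ∧
    c = Real.sqrt (∑ i, (M.mulVec v i) ^ 2)}

def IsOrthProj {k : ℕ} (P : Matrix (Fin k) (Fin k) ℝ) : Prop :=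
  P.IsSymm ∧ P * P = P

/-- `P` is the orthogonal projector onto the orthogonal complement of the column space of `A`
(the span of the left singular vectors of `A` for nonzero singular values is the column space,
and similarly the row space, i.e. column space of `Aᵀ`, for right singular vectors). -/
def IsProjPerpCol {m n : ℕ} (A : Matrix (Fin m) (Fin n) ℝ)
    (P : Matrix (Fin m) (Fin m) ℝ) : Prop :=
  IsOrthProj P ∧ P * A = 0 ∧ P.rank = m - A.rank

/-- `P` is the orthogonal projector onto the column space of `A`. -/
def IsProjCol {m n : ℕ} (A : Matrix (Fin m) (Fin n) ℝ)
    (P : Matrix (Fin m) (Fin m) ℝ) : Prop :=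
  IsOrthProj P ∧ P * A = A ∧ P.rank = A.rank

/-!
Since `B - P₁ B P₂ = (1 - P₁) B + P₁ B (1 - P₂)` and each `1 - Pᵢ` has rank at most `rank A`,
the matrix `B - P₁ B P₂` has rank at most `2 rank A`. Cauchy–Schwarz over the nonzero singular
values bounds the nuclear norm by `√rank` times the Frobenius norm, and `B ↦ P₁ B P₂` is an
orthogonal projection for the trace inner product, so `‖B - P₁ B P₂‖₂ ≤ ‖B‖₂`.
-/

open Finset

theorem Real.sum_sqrt_le_sqrt_card_ne_zero_mul_sqrt_sum {ι : Type*} (s : Finset ι) {f : ι → ℝ}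
    (hf : ∀ i, 0 ≤ f i) :
    ∑ i ∈ s, √(f i) ≤ √(#{i ∈ s | f i ≠ 0} : ℝ) * √(∑ i ∈ s, f i) := by
  classical
  have hsqrt : ∑ i ∈ s with f i ≠ 0, √(f i) = ∑ i ∈ s, √(f i) :=
    Finset.sum_filter_of_ne fun i _ h hi => h (by rw [hi, Real.sqrt_zero])
  have h := Real.sum_sqrt_mul_sqrt_le {i ∈ s | f i ≠ 0} (fun _ => zero_le_one) hf
  simpa [hsqrt, Finset.sum_filter_ne_zero] using h

namespace Matrix

variable {K : Type*} [Field K] {m n : Type*} [Fintype n]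

theorem rank_add_le (A B : Matrix m n K) : (A + B).rank ≤ A.rank + B.rank := by
  rw [rank, rank, rank, mulVecLin_add]
  exact (Submodule.finrank_mono (LinearMap.range_add_le _ _)).trans
    (Submodule.finrank_add_le_finrank_add_finrank _ _)

theorem rank_add_rank_one_sub_le_of_mul_self [Fintype m] [DecidableEq m] {P : Matrix m m K}
    (hP : P * P = P) : P.rank + (1 - P).rank ≤ Fintype.card m :=
  rank_add_rank_le_card_of_mul_eq_zero (by rw [mul_sub, mul_one, hP, sub_self])

theorem rank_sub_mul_mul_le [Fintype m] [DecidableEq m] [DecidableEq n] (B : Matrix m n K)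
    (P₁ : Matrix m m K) (P₂ : Matrix n n K) :
    (B - P₁ * B * P₂).rank ≤ (1 - P₁).rank + (1 - P₂).rank := by
  have hsplit : B - P₁ * B * P₂ = (1 - P₁) * B + P₁ * B * (1 - P₂) := by
    rw [Matrix.sub_mul, Matrix.one_mul, Matrix.mul_sub, Matrix.mul_one]; abel
  rw [hsplit]
  exact (rank_add_le _ _).trans
    (add_le_add (rank_mul_le_left _ _) (rank_mul_le_right _ _))

theorem trace_transpose_mul_self [Fintype m] {R : Type*} [CommSemiring R] (C : Matrix m n R) :
    (Cᵀ * C).trace = ∑ i, ∑ j, C i j ^ 2 := by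
  rw [trace, Finset.sum_comm]
  simp [mul_apply, sq]

end Matrix

theorem IsProjPerpCol.rank_one_sub_le {m n : ℕ} {A : Matrix (Fin m) (Fin n) ℝ}
    {P : Matrix (Fin m) (Fin m) ℝ} (hP : IsProjPerpCol A P) : (1 - P).rank ≤ A.rank := by
  obtain ⟨⟨-, hidem⟩, -, hrank⟩ := hP
  have hA : A.rank ≤ m := by simpa using A.rank_le_card_height
  have := Matrix.rank_add_rank_one_sub_le_of_mul_self hidem
  simp only [Fintype.card_fin] at this
  omega

theorem frobNorm_eq_sqrt_trace {m n : ℕ} (C : Matrix (Fin m) (Fin n) ℝ) :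
    frobNorm C = √(Cᵀ * C).trace := by
  rw [frobNorm, Matrix.trace_transpose_mul_self]

theorem nuclearNorm_le_sqrt_rank_mul_frobNorm {m n : ℕ} (C : Matrix (Fin m) (Fin n) ℝ) :
    nuclearNorm C ≤ √(C.rank : ℝ) * frobNorm C := by
  have hH := isHermitian_conjTranspose_mul_self C
  have hrank : C.rank = #{i | hH.eigenvalues i ≠ 0} := by
    rw [← rank_conjTranspose_mul_self, hH.rank_eq_card_non_zero_eigs, Fintype.card_subtype]
  have htrace : (Cᵀ * C).trace = ∑ i, hH.eigenvalues i := by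
    simpa [conjTranspose_eq_transpose_of_trivial] using hH.trace_eq_sum_eigenvalues
  rw [nuclearNorm, frobNorm_eq_sqrt_trace, hrank, htrace]
  exact Real.sum_sqrt_le_sqrt_card_ne_zero_mul_sqrt_sum _
    (eigenvalues_conjTranspose_mul_self_nonneg C)

theorem IsOrthProj.trace_transpose_mul_proj_mul_proj {m n : ℕ} {P₁ : Matrix (Fin m) (Fin m) ℝ}
    {P₂ : Matrix (Fin n) (Fin n) ℝ} (hP₁ : IsOrthProj P₁) (hP₂ : IsOrthProj P₂)
    (B : Matrix (Fin m) (Fin n) ℝ) :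
    (Bᵀ * (P₁ * B * P₂)).trace = ((P₁ * B * P₂)ᵀ * (P₁ * B * P₂)).trace := by
  obtain ⟨hsymm₁, hidem₁⟩ := hP₁
  obtain ⟨hsymm₂, hidem₂⟩ := hP₂
  calc (Bᵀ * (P₁ * B * P₂)).trace = (Bᵀ * (P₁ * P₁) * B * (P₂ * P₂)).trace := by
        rw [hidem₁, hidem₂]; simp only [Matrix.mul_assoc]
    _ = (Bᵀ * P₁ * (P₁ * B * P₂) * P₂).trace := by simp only [Matrix.mul_assoc]
    _ = (P₂ * (Bᵀ * P₁ * (P₁ * B * P₂))).trace := trace_mul_comm _ _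
    _ = ((P₁ * B * P₂)ᵀ * (P₁ * B * P₂)).trace := by
        rw [transpose_mul, transpose_mul, hsymm₁.eq, hsymm₂.eq]; simp only [Matrix.mul_assoc]

theorem frobNorm_sub_proj_mul_proj_le {m n : ℕ} {P₁ : Matrix (Fin m) (Fin m) ℝ}
    {P₂ : Matrix (Fin n) (Fin n) ℝ} (hP₁ : IsOrthProj P₁) (hP₂ : IsOrthProj P₂)
    (B : Matrix (Fin m) (Fin n) ℝ) : frobNorm (B - P₁ * B * P₂) ≤ frobNorm B := by
  set Q := P₁ * B * P₂
  have hcross : (Qᵀ * B).trace = (Bᵀ * Q).trace := by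
    rw [← trace_transpose, transpose_mul, transpose_transpose]
  have hexpand : (B - Q)ᵀ * (B - Q) = Bᵀ * B - Bᵀ * Q - Qᵀ * B + Qᵀ * Q := by
    simp only [transpose_sub, Matrix.sub_mul, Matrix.mul_sub]; abel
  have hQ_nonneg : 0 ≤ (Qᵀ * Q).trace := by
    rw [trace_transpose_mul_self]; positivity
  rw [frobNorm_eq_sqrt_trace, frobNorm_eq_sqrt_trace]
  apply Real.sqrt_le_sqrt
  rw [hexpand, trace_add, trace_sub, trace_sub, hcross,
    hP₁.trace_transpose_mul_proj_mul_proj hP₂ B]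
  linarith

/-- $‖\mathbf P_A(B)‖_1 ≤ \sqrt{2\,\mathrm{rank}(A)}\,‖B‖_2$. -/
theorem stmt2 {m1 m2 : ℕ} (A B : Matrix (Fin m1) (Fin m2) ℝ)
    (P1 : Matrix (Fin m1) (Fin m1) ℝ) (P2 : Matrix (Fin m2) (Fin m2) ℝ)
    (hP1 : IsProjPerpCol A P1) (hP2 : IsProjPerpCol Aᵀ P2) :
    nuclearNorm (B - P1 * B * P2) ≤ Real.sqrt (2 * A.rank) * frobNorm B := by
  have hrank : (B - P1 * B * P2).rank ≤ 2 * A.rank := by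
    have hsum := B.rank_sub_mul_mul_le P1 P2
    have h1 := hP1.rank_one_sub_le
    have h2 := hP2.rank_one_sub_le
    rw [rank_transpose] at h2
    omega
  calc nuclearNorm (B - P1 * B * P2)
      ≤ √((B - P1 * B * P2).rank : ℝ) * frobNorm (B - P1 * B * P2) :=
        nuclearNorm_le_sqrt_rank_mul_frobNorm _
    _ ≤ √(2 * A.rank) * frobNorm B := by
        gcongr
        · exact Real.sqrt_nonneg _
        · exact_mod_cast hrank
        · exact frobNorm_sub_proj_mul_proj_le hP1.1 hP2.1 B
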